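/- Let p_{3,k}(x) = C(3,k) (x+1)^k (1−x)^{3−k} / 2³, k = 0,…,3, be the classical Bernstein basis of ℙ₃[−1,1]. Then x³ = −p_{3,0}(x) + p_{3,1}(x) − p_{3,2}(x) + p_{3,3}(x) for all x, so the unique generalized Bernstein operator on ℙ₃[−1,1] fixing 1 and x³ is B₃f = f(−1)p_{3,0} + f(1)p_{3,1} + f(−1)p_{3,2} + f(1)p_{3,3}, whose node sequence (−1, 1, −1, 1) is not non-decreasing; moreover B₃ maps C[−1,1] into span{1, x³}, with B₃(x^{2k}) = 1 and B₃(x^{2k+1}) = x³ for every integer k ≥ 0. -/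
import Mathlib


open Set

noncomputable section

/-- The classical Bernstein basis of `ℙ₃[-1,1]`. -/
def pB3 : Fin 4 → ℝ → ℝ :=
  fun k x => (Nat.choose 3 (k : ℕ)) * (x + 1) ^ (k : ℕ) * (1 - x) ^ (3 - (k : ℕ)) / 8

/-- The node sequence `(-1, 1, -1, 1)`. -/
def tB3 : Fin 4 → ℝ := ![-1, 1, -1, 1]

lemma pB3_0 (x : ℝ) : pB3 0 x = (1 - x) ^ 3 / 8 := by
  show ((Nat.choose 3 0 : ℕ) : ℝ) * (x + 1) ^ 0 * (1 - x) ^ 3 / 8 = _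
  norm_num

lemma pB3_1 (x : ℝ) : pB3 1 x = 3 * (x + 1) * (1 - x) ^ 2 / 8 := by
  show ((Nat.choose 3 1 : ℕ) : ℝ) * (x + 1) ^ 1 * (1 - x) ^ 2 / 8 = _
  norm_num

lemma pB3_2 (x : ℝ) : pB3 2 x = 3 * (x + 1) ^ 2 * (1 - x) / 8 := by
  show ((Nat.choose 3 2 : ℕ) : ℝ) * (x + 1) ^ 2 * (1 - x) ^ 1 / 8 = _
  norm_num

lemma pB3_3 (x : ℝ) : pB3 3 x = (x + 1) ^ 3 / 8 := by
  show ((Nat.choose 3 3 : ℕ) : ℝ) * (x + 1) ^ 3 * (1 - x) ^ 0 / 8 = _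
  norm_num

lemma cube_inj {a b : ℝ} (h : a ^ 3 = b ^ 3) : a = b := by
  have hm : StrictMono (fun x : ℝ => x ^ 3) := Odd.strictMono_pow (by decide)
  exact hm.injective h

/-- On `ℙ₃[-1,1]`: `x³ = -p₀ + p₁ - p₂ + p₃`, so the unique generalized Bernstein operator
fixing `1` and `x³` is `B₃ f = f(-1)p₀ + f(1)p₁ + f(-1)p₂ + f(1)p₃` (all weights `1`),
whose node sequence `(-1,1,-1,1)` is not non-decreasing; moreover `B₃` maps `C[-1,1]` into
`span{1, x³}`, with `B₃(x^{2k}) = 1` and `B₃(x^{2k+1}) = x³` for every `k ≥ 0`. -/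
theorem cubic_projection_bernstein_operator_on_P3 :
    (∀ x : ℝ, x ^ 3 = -(pB3 0 x) + pB3 1 x - pB3 2 x + pB3 3 x) ∧
    (∀ x : ℝ, ∑ k, pB3 k x = 1) ∧
    (∀ x : ℝ, ∑ k, (tB3 k) ^ 3 * pB3 k x = x ^ 3) ∧
    (∀ s α : Fin 4 → ℝ, (∀ k, s k ∈ Set.Icc (-1 : ℝ) 1) → (∀ k, 0 < α k) →
      (∀ x : ℝ, ∑ k, α k * pB3 k x = 1) →
      (∀ x : ℝ, ∑ k, (s k) ^ 3 * α k * pB3 k x = x ^ 3) →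
      s = tB3 ∧ ∀ k, α k = 1) ∧
    ¬ Monotone tB3 ∧
    (∀ f : ℝ → ℝ, (fun x => ∑ k, f (tB3 k) * pB3 k x) ∈
      Submodule.span ℝ ({(fun _ => (1 : ℝ)), (fun x => x ^ 3)} : Set (ℝ → ℝ))) ∧
    (∀ m : ℕ, (∀ x : ℝ, ∑ k, (tB3 k) ^ (2 * m) * pB3 k x = 1) ∧
      (∀ x : ℝ, ∑ k, (tB3 k) ^ (2 * m + 1) * pB3 k x = x ^ 3)) := by
  refine ⟨?_, ?_, ?_, ?_, ?_, ?_, ?_⟩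
  · intro x; rw [pB3_0, pB3_1, pB3_2, pB3_3]; ring
  · intro x; rw [Fin.sum_univ_four, pB3_0, pB3_1, pB3_2, pB3_3]; ring
  · intro x
    rw [Fin.sum_univ_four, pB3_0, pB3_1, pB3_2, pB3_3]
    simp [tB3]; ring
  · intro s α hs hα h1 h2
    have e0 := h1 (-1); have e1 := h1 1; have e2 := h1 0; have e3 := h1 (1/2)
    rw [Fin.sum_univ_four, pB3_0, pB3_1, pB3_2, pB3_3] at e0 e1 e2 e3
    norm_num at e0 e1 e2 e3
    have hα0 : α 0 = 1 := by linarith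
    have hα3 : α 3 = 1 := by linarith
    have hα2 : α 2 = 1 := by linarith
    have hα1 : α 1 = 1 := by linarith
    have f0 := h2 (-1); have f1 := h2 1; have f2 := h2 0; have f3 := h2 (1/2)
    rw [Fin.sum_univ_four, pB3_0, pB3_1, pB3_2, pB3_3] at f0 f1 f2 f3
    rw [hα0, hα1, hα2, hα3] at f0 f1 f2 f3
    norm_num at f0 f1 f2 f3
    have hs0 : s 0 ^ 3 = -1 := by linarith
    have hs3 : s 3 ^ 3 = 1 := by linarith
    have hs2 : s 2 ^ 3 = -1 := by linarith
    have hs1 : s 1 ^ 3 = 1 := by linarith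
    refine ⟨funext fun k => ?_, fun k => by fin_cases k <;> assumption⟩
    have t0 : tB3 0 = -1 := rfl
    have t1 : tB3 1 = 1 := rfl
    have t2 : tB3 2 = -1 := rfl
    have t3 : tB3 3 = 1 := rfl
    fin_cases k
    · show s 0 = tB3 0
      exact cube_inj (by rw [hs0, t0]; norm_num)
    · show s 1 = tB3 1
      exact cube_inj (by rw [hs1, t1]; norm_num)
    · show s 2 = tB3 2
      exact cube_inj (by rw [hs2, t2]; norm_num)
    · show s 3 = tB3 3
      exact cube_inj (by rw [hs3, t3]; norm_num)
  · intro h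
    have := h (show (1 : Fin 4) ≤ 2 by decide)
    simp [tB3] at this
    linarith
  · intro f
    have key : (fun x => ∑ k, f (tB3 k) * pB3 k x)
        = ((f (-1) + f 1) / 2) • (fun _ : ℝ => (1 : ℝ))
          + ((f 1 - f (-1)) / 2) • (fun x : ℝ => x ^ 3) := by
      funext x
      rw [Fin.sum_univ_four, pB3_0, pB3_1, pB3_2, pB3_3]
      simp [tB3, smul_eq_mul]
      ring
    rw [key]
    exact Submodule.add_mem _
      (Submodule.smul_mem _ _ (Submodule.subset_span (by simp)))
      (Submodule.smul_mem _ _ (Submodule.subset_span (by simp)))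
  · intro m
    constructor
    · intro x
      rw [Fin.sum_univ_four, pB3_0, pB3_1, pB3_2, pB3_3]
      simp [tB3, pow_mul]
      ring
    · intro x
      rw [Fin.sum_univ_four, pB3_0, pB3_1, pB3_2, pB3_3]
      simp [tB3, pow_succ, pow_mul]
      ring
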